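/- arXiv:2411.07998 — 6 statements merged into one kernel-verified Lean document; each statement's English description precedes it below -/
import Mathlib

section
/- For all g ∈ G and y ∈ Y, the observer map β satisfies β(ρ_g(y)) = φ_g(β(y)); that is, β commutes with the transformation group. -/
/-! The frame of a transformed point is `γ(ρ_g y) = γ(y) g⁻¹`, so the normalized point
`ρ_{γ(y)}(y)` is an invariant of the orbit, and all dependence of `β(ρ_g y)` on `g` sits in
the outer factor `φ_{(γ(y) g⁻¹)⁻¹} = φ_g ∘ φ_{γ(y)⁻¹}`. -/

section MovingFrame

variable {G Y : Type*} [Group G] {ρ : G → Y → Y} {γ : Y → G}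

theorem moving_frame_act_eq (hγ : ∀ g y, γ (ρ g y) * g = γ y) (g : G) (y : Y) :
    γ (ρ g y) = γ y * g⁻¹ :=
  eq_mul_inv_of_mul_eq (hγ g y)

theorem moving_frame_normalize_act (hρ_comp : ∀ g h y, ρ (g * h) y = ρ g (ρ h y))
    (hγ : ∀ g y, γ (ρ g y) * g = γ y) (g : G) (y : Y) :
    ρ (γ (ρ g y)) (ρ g y) = ρ (γ y) y := by
  rw [← hρ_comp, hγ]

end MovingFrame

theorem observer_map_commutes_general
    {G X Y : Type*} [Group G]
    (φ : G → X → X) (ρ : G → Y → Y)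
    (hφ_comp : ∀ g h x, φ (g * h) x = φ g (φ h x))
    (hρ_comp : ∀ g h y, ρ (g * h) y = ρ g (ρ h y))
    (γ : Y → G)
    (hγ : ∀ g y, γ (ρ g y) * g = γ y)
    (ℓ : Y → X)
    (β : Y → X)
    (hβ : ∀ y, β y = φ (γ y)⁻¹ (ℓ (ρ (γ y) y))) :
    ∀ (g : G) (y : Y), β (ρ g y) = φ g (β y) := by
  intro g y
  calc β (ρ g y) = φ (γ (ρ g y))⁻¹ (ℓ (ρ (γ y) y)) := by
        rw [hβ, moving_frame_normalize_act hρ_comp hγ]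
    _ = φ (g * (γ y)⁻¹) (ℓ (ρ (γ y) y)) := by
        rw [moving_frame_act_eq hγ, mul_inv_rev, inv_inv]
    _ = φ g (β y) := by rw [hφ_comp, hβ]

/-- The observer map `β(y) = φ_{γ(y)⁻¹}(ℓ(ρ_{γ(y)}(y)))`, built from a
moving frame `γ` (satisfying `γ(ρ_g(y)) * g = γ(y)`), commutes with the transformation
group: `β(ρ_g(y)) = φ_g(β(y))` for all `g ∈ G`, `y ∈ Y`. -/
theorem observer_map_commutes
    {G X Y : Type*} [Group G]
    (φ : G → X → X) (ρ : G → Y → Y)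
    (hφ_id : ∀ x, φ 1 x = x)
    (hφ_comp : ∀ g h x, φ (g * h) x = φ g (φ h x))
    (hρ_id : ∀ y, ρ 1 y = y)
    (hρ_comp : ∀ g h y, ρ (g * h) y = ρ g (ρ h y))
    (γ : Y → G)
    (hγ : ∀ g y, γ (ρ g y) * g = γ y)
    (ℓ : Y → X)
    (β : Y → X)
    (hβ : ∀ y, β y = φ (γ y)⁻¹ (ℓ (ρ (γ y) y))) :
    ∀ (g : G) (y : Y), β (ρ g y) = φ g (β y) :=
  observer_map_commutes_general φ ρ hφ_comp hρ_comp γ hγ ℓ β hβ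
end

section
/- For every g ∈ G, ζ ∈ X, x ∈ X, y ∈ Y, and u ∈ U, the derivative of the map y ↦ λ(y; φ_{g⁻¹}(ζ)) at y, applied to the vector h(x, y, u), equals the derivative of the map y ↦ λ(y; ζ) at ρ_g(y), applied to the vector h(φ_g(x), ρ_g(y), ψ_g(u)). -/
/-! Equivariance of the moving frame, `γ (ρ g y) = γ y * g⁻¹`, turns `y ↦ λ(y; φ_{g⁻¹} ζ)` into
`λ(·; ζ) ∘ ρ g`; the chain rule followed by the invariance of `h` gives the claim. -/

theorem moving_frame_apply_action {G W : Type*} [Group G] {ρ : G → W → W} {γ : W → G}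
    (hγ : ∀ g y, γ (ρ g y) * g = γ y) (g : G) (y : W) :
    γ (ρ g y) = γ y * g⁻¹ :=
  eq_mul_inv_of_mul_eq (hγ g y)

theorem moving_frame_apply_inv_eq_comp {G V W : Type*} [Group G] {φ : G → V → V}
    {ρ : G → W → W} {γ : W → G} (hφ_comp : ∀ g h x, φ (g * h) x = φ g (φ h x))
    (hγ : ∀ g y, γ (ρ g y) * g = γ y) (g : G) (ζ : V) :
    (fun y => φ (γ y) (φ g⁻¹ ζ)) = (fun y => φ (γ y) ζ) ∘ ρ g := by
  funext y
  rw [Function.comp_apply, moving_frame_apply_action hγ, hφ_comp]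

theorem lambda_tangent_invariant_general
    {G : Type*} [Group G]
    {V W : Type*} (U : Type*)
    [NormedAddCommGroup V] [NormedSpace ℝ V]
    [NormedAddCommGroup W] [NormedSpace ℝ W]
    (φ : G → V → V) (ρ : G → W → W) (ψ : G → U → U)
    (hφ_comp : ∀ g h x, φ (g * h) x = φ g (φ h x))
    (hρ_diff : ∀ g, Differentiable ℝ (ρ g))
    (γ : W → G)
    (hγ : ∀ g y, γ (ρ g y) * g = γ y)
    (hlam_diff : ∀ ξ : V, Differentiable ℝ (fun y : W => φ (γ y) ξ))
    (h : V → W → U → W)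
    (h_inv : ∀ (g : G) (x : V) (y : W) (u : U),
      fderiv ℝ (ρ g) y (h x y u) = h (φ g x) (ρ g y) (ψ g u)) :
    ∀ (g : G) (ζ x : V) (y : W) (u : U),
      fderiv ℝ (fun y' : W => φ (γ y') (φ g⁻¹ ζ)) y (h x y u)
        = fderiv ℝ (fun y' : W => φ (γ y') ζ) (ρ g y)
            (h (φ g x) (ρ g y) (ψ g u)) := by
  intro g ζ x y u
  rw [moving_frame_apply_inv_eq_comp hφ_comp hγ g ζ,
    fderiv_comp y (hlam_diff ζ (ρ g y)) (hρ_diff g y), ContinuousLinearMap.comp_apply, h_inv]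

/-- Lemma 2 of the paper: with `λ(y; ξ) = φ_{γ(y)}(ξ)` and a `G`-invariant
vector field `h` on `Y` (i.e. `Dρ_g(y)(h(x,y,u)) = h(φ_g(x), ρ_g(y), ψ_g(u))`), the
derivative of `y ↦ λ(y; φ_{g⁻¹}(ζ))` at `y` applied to `h(x,y,u)` equals the derivative
of `y ↦ λ(y; ζ)` at `ρ_g(y)` applied to `h(φ_g(x), ρ_g(y), ψ_g(u))`. -/
theorem lambda_tangent_invariant
    {G : Type*} [Group G]
    {V W : Type*} (U : Type*)
    [NormedAddCommGroup V] [NormedSpace ℝ V] [FiniteDimensional ℝ V]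
    [NormedAddCommGroup W] [NormedSpace ℝ W] [FiniteDimensional ℝ W]
    (φ : G → V → V) (ρ : G → W → W) (ψ : G → U → U)
    (hφ_id : ∀ x, φ 1 x = x)
    (hφ_comp : ∀ g h x, φ (g * h) x = φ g (φ h x))
    (hρ_id : ∀ y, ρ 1 y = y)
    (hρ_comp : ∀ g h y, ρ (g * h) y = ρ g (ρ h y))
    (hψ_id : ∀ u, ψ 1 u = u)
    (hψ_comp : ∀ g h u, ψ (g * h) u = ψ g (ψ h u))
    (hρ_diff : ∀ g, Differentiable ℝ (ρ g))
    (γ : W → G)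
    (hγ : ∀ g y, γ (ρ g y) * g = γ y)
    (hlam_diff : ∀ ξ : V, Differentiable ℝ (fun y : W => φ (γ y) ξ))
    (h : V → W → U → W)
    (h_inv : ∀ (g : G) (x : V) (y : W) (u : U),
      fderiv ℝ (ρ g) y (h x y u) = h (φ g x) (ρ g y) (ψ g u)) :
    ∀ (g : G) (ζ x : V) (y : W) (u : U),
      fderiv ℝ (fun y' : W => φ (γ y') (φ g⁻¹ ζ)) y (h x y u)
        = fderiv ℝ (fun y' : W => φ (γ y') ζ) (ρ g y)
            (h (φ g x) (ρ g y) (ψ g u)) :=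
  lambda_tangent_invariant_general U φ ρ ψ hφ_comp hρ_diff γ hγ hlam_diff h h_inv
end

section
/- Define α(z, y, u) = f(z + β(y), y, u) − Dβ(y)(h(z + β(y), y, u)) and F(x̂, x, y, u) = α(x̂ − β(y), y, u) + Dβ(y)(h(x, y, u)). Then the state-estimate dynamics are G-invariant: for all g ∈ G, x̂, x ∈ X, y ∈ Y, u ∈ U, A(g)·F(x̂, x, y, u) = F(A(g)x̂, A(g)x, ρ_g(y), ψ_g(u)). -/
/-!
The observer map `β` built from the moving frame is equivariant, `β (ρ_g y) = A(g) β(y)`, and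
differentiating this identity gives `Dβ(ρ_g y) ∘ Dρ_g(y) = A(g) ∘ Dβ(y)`. Since `x̂ - β(y) + β(y) = x̂`,
the dynamics reduce to `F(x̂, x, y, u) = f(x̂, y, u) - Dβ(y) h(x̂, y, u) + Dβ(y) h(x, y, u)`, and each
term transforms correctly by the invariance of `f`, of `h` and the equivariance of `Dβ`.
-/

theorem observer_map_equivariant {G R V W : Type*} [Mul G] [Semiring R]
    [TopologicalSpace V] [AddCommMonoid V] [Module R V]
    (A : G → (V ≃L[R] V)) (ρ : G → W → W)
    (hA_comp : ∀ g h x, A (g * h) x = A g (A h x))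
    (hρ_comp : ∀ g h y, ρ (g * h) y = ρ g (ρ h y))
    (γ : W → G) (hγ : ∀ g y, γ (ρ g y) * g = γ y)
    (ℓ : W → V) (β : W → V) (hβ : ∀ y, β y = (A (γ y)).symm (ℓ (ρ (γ y) y)))
    (g : G) (y : W) : β (ρ g y) = A g (β y) := by
  have hframe : ρ (γ (ρ g y)) (ρ g y) = ρ (γ y) y := by rw [← hρ_comp, hγ]
  rw [hβ (ρ g y), hframe, ContinuousLinearEquiv.symm_apply_eq, ← hA_comp, hγ, hβ y,
    ContinuousLinearEquiv.apply_symm_apply]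

theorem fderiv_apply_fderiv_of_comp_eq {𝕜 E F : Type*} [NontriviallyNormedField 𝕜]
    [NormedAddCommGroup E] [NormedSpace 𝕜 E] [NormedAddCommGroup F] [NormedSpace 𝕜 F]
    {β : E → F} {ρ : E → E} (L : F ≃L[𝕜] F) (hβρ : ∀ y, β (ρ y) = L (β y)) {y : E}
    (hβ : DifferentiableAt 𝕜 β (ρ y)) (hρ : DifferentiableAt 𝕜 ρ y) (v : E) :
    fderiv 𝕜 β (ρ y) (fderiv 𝕜 ρ y v) = L (fderiv 𝕜 β y v) := by
  have hcomp : β ∘ ρ = L ∘ β := funext hβρ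
  calc fderiv 𝕜 β (ρ y) (fderiv 𝕜 ρ y v) = fderiv 𝕜 (β ∘ ρ) y v := by
        rw [fderiv_comp y hβ hρ, ContinuousLinearMap.comp_apply]
    _ = L (fderiv 𝕜 β y v) := by
        rw [hcomp, L.comp_fderiv, ContinuousLinearMap.comp_apply, ContinuousLinearEquiv.coe_coe]

theorem pre_observer_dynamics_invariant_general
    {G : Type*} [Group G]
    {V W : Type*} (U : Type*)
    [NormedAddCommGroup V] [NormedSpace ℝ V]
    [NormedAddCommGroup W] [NormedSpace ℝ W]
    (A : G → (V ≃L[ℝ] V)) (ρ : G → W → W) (ψ : G → U → U)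
    (hA_comp : ∀ g h x, A (g * h) x = A g (A h x))
    (hρ_comp : ∀ g h y, ρ (g * h) y = ρ g (ρ h y))
    (hρ_diff : ∀ g, Differentiable ℝ (ρ g))
    (γ : W → G)
    (hγ : ∀ g y, γ (ρ g y) * g = γ y)
    (ℓ : W → V)
    (β : W → V)
    (hβ : ∀ y, β y = (A (γ y)).symm (ℓ (ρ (γ y) y)))
    (hβ_diff : Differentiable ℝ β)
    (f : V → W → U → V) (hvf : V → W → U → W)
    (f_inv : ∀ (g : G) (x : V) (y : W) (u : U),
      A g (f x y u) = f (A g x) (ρ g y) (ψ g u))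
    (h_inv : ∀ (g : G) (x : V) (y : W) (u : U),
      fderiv ℝ (ρ g) y (hvf x y u) = hvf (A g x) (ρ g y) (ψ g u))
    (α : V → W → U → V)
    (hα : ∀ (z : V) (y : W) (u : U),
      α z y u = f (z + β y) y u - fderiv ℝ β y (hvf (z + β y) y u))
    (F : V → V → W → U → V)
    (hF : ∀ (xhat x : V) (y : W) (u : U),
      F xhat x y u = α (xhat - β y) y u + fderiv ℝ β y (hvf x y u)) :
    ∀ (g : G) (xhat x : V) (y : W) (u : U),
      A g (F xhat x y u) = F (A g xhat) (A g x) (ρ g y) (ψ g u) := by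
  intro g xhat x y u
  have hF_eq : ∀ xhat x y u, F xhat x y u =
      f xhat y u - fderiv ℝ β y (hvf xhat y u) + fderiv ℝ β y (hvf x y u) := by
    intro xhat x y u
    rw [hF, hα, sub_add_cancel]
  have hDβ : ∀ v, fderiv ℝ β (ρ g y) (fderiv ℝ (ρ g) y v) = A g (fderiv ℝ β y v) :=
    fderiv_apply_fderiv_of_comp_eq (A g)
      (observer_map_equivariant A ρ hA_comp hρ_comp γ hγ ℓ β hβ g) (hβ_diff _) (hρ_diff g y)
  rw [hF_eq, hF_eq, ← f_inv, ← h_inv, ← h_inv, hDβ, hDβ, map_add, map_sub]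

/-- invariance of the pre-observer state-estimate dynamics:
With the linear action `φ_g(x) = A(g)x`, the observer map
`β(y) = A(γ(y))⁻¹ ℓ(ρ_{γ(y)}(y))`,
`α(z,y,u) = f(z + β(y), y, u) − Dβ(y)(h(z + β(y), y, u))`, and
`F(x̂,x,y,u) = α(x̂ − β(y), y, u) + Dβ(y)(h(x,y,u))`,
the state-estimate dynamics are `G`-invariant:
`A(g)·F(x̂,x,y,u) = F(A(g)x̂, A(g)x, ρ_g(y), ψ_g(u))`. -/
theorem pre_observer_dynamics_invariant
    {G : Type*} [Group G]
    {V W : Type*} (U : Type*)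
    [NormedAddCommGroup V] [NormedSpace ℝ V] [FiniteDimensional ℝ V]
    [NormedAddCommGroup W] [NormedSpace ℝ W] [FiniteDimensional ℝ W]
    (A : G → (V ≃L[ℝ] V)) (ρ : G → W → W) (ψ : G → U → U)
    (hA_id : ∀ x, A 1 x = x)
    (hA_comp : ∀ g h x, A (g * h) x = A g (A h x))
    (hρ_id : ∀ y, ρ 1 y = y)
    (hρ_comp : ∀ g h y, ρ (g * h) y = ρ g (ρ h y))
    (hψ_id : ∀ u, ψ 1 u = u)
    (hψ_comp : ∀ g h u, ψ (g * h) u = ψ g (ψ h u))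
    (hρ_diff : ∀ g, Differentiable ℝ (ρ g))
    (γ : W → G)
    (hγ : ∀ g y, γ (ρ g y) * g = γ y)
    (ℓ : W → V) (hℓ_diff : Differentiable ℝ ℓ)
    (β : W → V)
    (hβ : ∀ y, β y = (A (γ y)).symm (ℓ (ρ (γ y) y)))
    (hβ_diff : Differentiable ℝ β)
    (f : V → W → U → V) (hvf : V → W → U → W)
    (f_inv : ∀ (g : G) (x : V) (y : W) (u : U),
      A g (f x y u) = f (A g x) (ρ g y) (ψ g u))
    (h_inv : ∀ (g : G) (x : V) (y : W) (u : U),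
      fderiv ℝ (ρ g) y (hvf x y u) = hvf (A g x) (ρ g y) (ψ g u))
    (α : V → W → U → V)
    (hα : ∀ (z : V) (y : W) (u : U),
      α z y u = f (z + β y) y u - fderiv ℝ β y (hvf (z + β y) y u))
    (F : V → V → W → U → V)
    (hF : ∀ (xhat x : V) (y : W) (u : U),
      F xhat x y u = α (xhat - β y) y u + fderiv ℝ β y (hvf x y u)) :
    ∀ (g : G) (xhat x : V) (y : W) (u : U),
      A g (F xhat x y u) = F (A g xhat) (A g x) (ρ g y) (ψ g u) :=
  pre_observer_dynamics_invariant_general U A ρ ψ hA_comp hρ_comp hρ_diff γ hγ ℓ β hβ hβ_diff f hvf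
    f_inv h_inv α hα F hF
end

section
/- Suppose on an interval [t₀, t₁] the differentiable curves x(t) ∈ X, y(t) ∈ Y, z(t) ∈ X and the signal u(t) ∈ U satisfy ẋ = f(x, y, u), ẏ = h(x, y, u), and ż = α(z, y, u), where α(z, y, u) = f(z + β(y), y, u) − Dβ(y)(h(z + β(y), y, u)). If z(t₀) = x(t₀) − β(y(t₀)) and for each t the map z ↦ α(z, y(t), u(t)) is Lipschitz with a constant uniform in t, then z(t) = x(t) − β(y(t)) for all t ∈ [t₀, t₁]; that is, the zero-error manifold {(z, x, y) : z = x − β(y)} is positively invariant. -/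
/-!
Along a trajectory, the error `x - β ∘ y` has derivative `f(x, y, u) - Dβ(y) h(x, y, u)`, which is
`α(x - β(y), y, u)` since `x = (x - β(y)) + β(y)`. So `z` and `x - β ∘ y` solve the same ODE
`ζ̇ = α(ζ, y(t), u(t))` with the same initial value, and the uniform Lipschitz bound makes its
solutions unique (Grönwall).
-/

open Set

section

variable {E : Type*} [NormedAddCommGroup E] [NormedSpace ℝ E]

theorem eqOn_Icc_of_hasDerivAt_of_lipschitzWith {v : ℝ → E → E} {K : NNReal} {a b : ℝ}
    {f g : ℝ → E} (hv : ∀ t ∈ Icc a b, LipschitzWith K (v t))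
    (hf : ∀ t ∈ Icc a b, HasDerivAt f (v t (f t)) t)
    (hg : ∀ t ∈ Icc a b, HasDerivAt g (v t (g t)) t) (ha : f a = g a) :
    EqOn f g (Icc a b) :=
  ODE_solution_unique_of_mem_Icc_right (s := fun _ => univ)
    (fun t ht => (hv t (Ico_subset_Icc_self ht)).lipschitzOnWith)
    (fun t ht => (hf t ht).continuousAt.continuousWithinAt)
    (fun t ht => (hf t (Ico_subset_Icc_self ht)).hasDerivWithinAt) (fun _ _ => mem_univ _)
    (fun t ht => (hg t ht).continuousAt.continuousWithinAt)
    (fun t ht => (hg t (Ico_subset_Icc_self ht)).hasDerivWithinAt) (fun _ _ => mem_univ _) ha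

variable {W : Type*} [NormedAddCommGroup W] [NormedSpace ℝ W]

theorem hasDerivAt_error_of_hasDerivAt {U : Type*} {f : E → W → U → E} {h : E → W → U → W}
    {β : W → E} {α : E → W → U → E}
    (hα : ∀ z y u, α z y u = f (z + β y) y u - fderiv ℝ β y (h (z + β y) y u))
    {x : ℝ → E} {y : ℝ → W} {u : ℝ → U} {t : ℝ}
    (hx : HasDerivAt x (f (x t) (y t) (u t)) t) (hy : HasDerivAt y (h (x t) (y t) (u t)) t)
    (hβ : DifferentiableAt ℝ β (y t)) :
    HasDerivAt (fun s => x s - β (y s)) (α (x t - β (y t)) (y t) (u t)) t := by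
  rw [hα, sub_add_cancel]
  exact hx.sub (hβ.hasFDerivAt.comp_hasDerivAt t hy)

end

theorem zero_error_manifold_positively_invariant_general
    {n : ℕ} {W U : Type*}
    [NormedAddCommGroup W] [NormedSpace ℝ W]
    (f : EuclideanSpace ℝ (Fin n) → W → U → EuclideanSpace ℝ (Fin n))
    (hvf : EuclideanSpace ℝ (Fin n) → W → U → W)
    (β : W → EuclideanSpace ℝ (Fin n))
    (hβ : ContDiff ℝ 1 β)
    (α : EuclideanSpace ℝ (Fin n) → W → U → EuclideanSpace ℝ (Fin n))
    (hα : ∀ z y u, α z y u = f (z + β y) y u - fderiv ℝ β y (hvf (z + β y) y u))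
    (t₀ t₁ : ℝ)
    (x z : ℝ → EuclideanSpace ℝ (Fin n)) (y : ℝ → W) (u : ℝ → U)
    (hx : ∀ t ∈ Icc t₀ t₁, HasDerivAt x (f (x t) (y t) (u t)) t)
    (hy : ∀ t ∈ Icc t₀ t₁, HasDerivAt y (hvf (x t) (y t) (u t)) t)
    (hz : ∀ t ∈ Icc t₀ t₁, HasDerivAt z (α (z t) (y t) (u t)) t)
    (K : NNReal)
    (hLip : ∀ t ∈ Icc t₀ t₁, LipschitzWith K (fun ζ => α ζ (y t) (u t)))
    (h0 : z t₀ = x t₀ - β (y t₀)) :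
    ∀ t ∈ Icc t₀ t₁, z t = x t - β (y t) :=
  eqOn_Icc_of_hasDerivAt_of_lipschitzWith hLip hz
    (fun t ht => hasDerivAt_error_of_hasDerivAt hα (hx t ht) (hy t ht)
      (hβ.differentiable one_ne_zero _))
    h0

open Set in
/-- positive invariance of the zero-error manifold:
if `ẋ = f(x,y,u)`, `ẏ = h(x,y,u)`, `ż = α(z,y,u)` on `[t₀, t₁]` where
`α(z,y,u) = f(z + β(y), y, u) − Dβ(y)(h(z + β(y), y, u))`, the initial condition
satisfies `z(t₀) = x(t₀) − β(y(t₀))`, and `z ↦ α(z, y(t), u(t))` is Lipschitz with a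
constant uniform in `t`, then `z(t) = x(t) − β(y(t))` for all `t ∈ [t₀, t₁]`. -/
theorem zero_error_manifold_positively_invariant
    {n : ℕ} {W U : Type*}
    [NormedAddCommGroup W] [NormedSpace ℝ W] [FiniteDimensional ℝ W]
    (f : EuclideanSpace ℝ (Fin n) → W → U → EuclideanSpace ℝ (Fin n))
    (hvf : EuclideanSpace ℝ (Fin n) → W → U → W)
    (hf_cont : ∀ u : U, Continuous fun p : EuclideanSpace ℝ (Fin n) × W => f p.1 p.2 u)
    (hh_cont : ∀ u : U, Continuous fun p : EuclideanSpace ℝ (Fin n) × W => hvf p.1 p.2 u)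
    (β : W → EuclideanSpace ℝ (Fin n))
    (hβ : ContDiff ℝ 1 β)
    (α : EuclideanSpace ℝ (Fin n) → W → U → EuclideanSpace ℝ (Fin n))
    (hα : ∀ z y u, α z y u = f (z + β y) y u - fderiv ℝ β y (hvf (z + β y) y u))
    (t₀ t₁ : ℝ) (ht : t₀ ≤ t₁)
    (x z : ℝ → EuclideanSpace ℝ (Fin n)) (y : ℝ → W) (u : ℝ → U)
    (hx : ∀ t ∈ Icc t₀ t₁, HasDerivAt x (f (x t) (y t) (u t)) t)
    (hy : ∀ t ∈ Icc t₀ t₁, HasDerivAt y (hvf (x t) (y t) (u t)) t)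
    (hz : ∀ t ∈ Icc t₀ t₁, HasDerivAt z (α (z t) (y t) (u t)) t)
    (K : NNReal)
    (hLip : ∀ t ∈ Icc t₀ t₁, LipschitzWith K (fun ζ => α ζ (y t) (u t)))
    (h0 : z t₀ = x t₀ - β (y t₀)) :
    ∀ t ∈ Icc t₀ t₁, z t = x t - β (y t) :=
  zero_error_manifold_positively_invariant_general f hvf β hβ α hα t₀ t₁ x z y u hx hy hz K hLip h0
end

section
/- Let v, q, z, ω, a : ℝ → ℝ³ and R : ℝ → ℝ^{3×3} be differentiable curves with R(t) R(t)ᵀ = I for all t, satisfying the rigid-body equations v̇ = v × ω + Rᵀ g + a, q̇ = R v, Ṙ = R ⟦ω⟧, and the observer equation ż = (z + Rᵀ L q) × ω + Rᵀ g + a + ⟦ω⟧ Rᵀ L q − Rᵀ L R (z + Rᵀ L q). Then the invariant error η(t) = R(t) z(t) + L q(t) − R(t) v(t) satisfies the linear differential equation η̇(t) = −L η(t) for all t. -/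
open Matrix

attribute [local instance] Matrix.normedAddCommGroup Matrix.normedSpace

/-- The skew-symmetric cross-product-equivalent matrix `⟦ξ⟧`, satisfying
`⟦ξ⟧ η = ξ × η` for all `η ∈ ℝ³`. -/
def skew (ξ : Fin 3 → ℝ) : Matrix (Fin 3) (Fin 3) ℝ :=
  !![0, -ξ 2, ξ 1; ξ 2, 0, -ξ 0; -ξ 1, ξ 0, 0]

/-!
The rotation terms cancel in world coordinates: `Ṙ = R ⟦ω⟧` and `⟦ω⟧ x = ω × x = -(x × ω)`,
so in the derivative of `R x` the contribution `R (ω × x)` of `Ṙ` cancels the `R (x × ω)` in `ẋ`.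
With `R Rᵀ = 1` this gives `d/dt (R v) = g + R a` and `d/dt (R z) = g + R a - L (R z + L q)`,
while `d/dt (L q) = L R v`; hence `η̇ = -L η`.
-/

theorem HasDerivAt.matrix_mulVec {𝕜 m n : Type*} [NontriviallyNormedField 𝕜] [CompleteSpace 𝕜]
    [Fintype m] [Fintype n] {M : 𝕜 → Matrix m n 𝕜} {u : 𝕜 → n → 𝕜} {M' : Matrix m n 𝕜}
    {u' : n → 𝕜} {t : 𝕜} (hM : HasDerivAt M M' t) (hu : HasDerivAt u u' t) :
    HasDerivAt (fun s => M s *ᵥ u s) (M' *ᵥ u t + M t *ᵥ u') t := by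
  let B : Matrix m n 𝕜 →L[𝕜] (n → 𝕜) →L[𝕜] (m → 𝕜) := LinearMap.toContinuousLinearMap
    ((LinearMap.toContinuousLinearMap : ((n → 𝕜) →ₗ[𝕜] m → 𝕜) ≃ₗ[𝕜] _).toLinearMap ∘ₗ
      mulVecBilin 𝕜 𝕜)
  rw [add_comm]
  exact B.hasDerivAt_of_bilinear (fun _ => hM) (fun _ => hu)

theorem cross_eq_neg_skew_mulVec (x ω : Fin 3 → ℝ) : x ⨯₃ ω = -(skew ω *ᵥ x) := by
  rw [← cross_anticomm]
  congr 1
  ext i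
  fin_cases i <;> simp [skew, mulVec, dotProduct, crossProduct, Fin.sum_univ_three] <;> ring

section Orthogonal

variable {R : Matrix (Fin 3) (Fin 3) ℝ} (hR : R * Rᵀ = 1)
include hR

theorem mulVec_transpose_mulVec (w : Fin 3 → ℝ) : R *ᵥ (Rᵀ *ᵥ w) = w := by
  rw [mulVec_mulVec, hR, one_mulVec]

theorem rigidBody_world_velocity_deriv_eq (g v ω a : Fin 3 → ℝ) :
    (R * skew ω) *ᵥ v + R *ᵥ (v ⨯₃ ω + Rᵀ *ᵥ g + a) = g + R *ᵥ a := by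
  simp only [cross_eq_neg_skew_mulVec, ← mulVec_mulVec, mulVec_add, mulVec_neg,
    mulVec_transpose_mulVec hR]
  abel

theorem observer_world_deriv_eq (L : Matrix (Fin 3) (Fin 3) ℝ) (g z q ω a : Fin 3 → ℝ) :
    (R * skew ω) *ᵥ z + R *ᵥ ((z + Rᵀ *ᵥ (L *ᵥ q)) ⨯₃ ω + Rᵀ *ᵥ g + a
        + skew ω *ᵥ (Rᵀ *ᵥ (L *ᵥ q)) - Rᵀ *ᵥ (L *ᵥ (R *ᵥ (z + Rᵀ *ᵥ (L *ᵥ q))))) =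
      g + R *ᵥ a - L *ᵥ (R *ᵥ z + L *ᵥ q) := by
  simp only [cross_eq_neg_skew_mulVec, ← mulVec_mulVec, mulVec_add, mulVec_sub, mulVec_neg,
    mulVec_transpose_mulVec hR]
  abel

end Orthogonal

/-- along trajectories of the rigid-body equations
`v̇ = v × ω + Rᵀ g + a`, `q̇ = R v`, `Ṙ = R ⟦ω⟧` (with `R(t) R(t)ᵀ = I`) and of the
observer `ż = (z + Rᵀ L q) × ω + Rᵀ g + a + ⟦ω⟧ Rᵀ L q − Rᵀ L R (z + Rᵀ L q)`,
the invariant error `η(t) = R(t) z(t) + L q(t) − R(t) v(t)` satisfies `η̇ = −L η`. -/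
theorem rigid_body_invariant_error_linear_dynamics
    (g : Fin 3 → ℝ) (L : Matrix (Fin 3) (Fin 3) ℝ)
    (v q z ω a : ℝ → (Fin 3 → ℝ)) (R : ℝ → Matrix (Fin 3) (Fin 3) ℝ)
    (hR_orth : ∀ t, R t * (R t)ᵀ = 1)
    (hv : ∀ t, HasDerivAt v (v t ⨯₃ ω t + (R t)ᵀ.mulVec g + a t) t)
    (hq : ∀ t, HasDerivAt q ((R t).mulVec (v t)) t)
    (hR : ∀ t, HasDerivAt R (R t * skew (ω t)) t)
    (hz : ∀ t, HasDerivAt z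
      ((z t + (R t)ᵀ.mulVec (L.mulVec (q t))) ⨯₃ ω t + (R t)ᵀ.mulVec g + a t
        + (skew (ω t)).mulVec ((R t)ᵀ.mulVec (L.mulVec (q t)))
        - (R t)ᵀ.mulVec (L.mulVec ((R t).mulVec
            (z t + (R t)ᵀ.mulVec (L.mulVec (q t)))))) t)
    (η : ℝ → (Fin 3 → ℝ))
    (hη : ∀ t, η t = (R t).mulVec (z t) + L.mulVec (q t) - (R t).mulVec (v t)) :
    ∀ t, HasDerivAt η (-(L.mulVec (η t))) t := by
  intro t
  have hderiv := (((hR t).matrix_mulVec (hz t)).add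
    ((hasDerivAt_const t L).matrix_mulVec (hq t))).sub ((hR t).matrix_mulVec (hv t))
  rw [observer_world_deriv_eq (hR_orth t), rigidBody_world_velocity_deriv_eq (hR_orth t),
    zero_mulVec, zero_add] at hderiv
  rw [hη t, funext hη]
  refine hderiv.congr_deriv ?_
  simp only [mulVec_add, mulVec_sub]
  abel
end

section
/- Let v, q, z, ω, a : ℝ → ℝ³ and R : ℝ → ℝ^{3×3} be differentiable curves with R(t) R(t)ᵀ = I for all t, satisfying v̇ = v × ω + Rᵀ g + a, q̇ = R v, Ṙ = R ⟦ω⟧, and ż = (z + Rᵀ L q) × ω + Rᵀ g + a + ⟦ω⟧ Rᵀ L q − Rᵀ L R (z + Rᵀ L q). Suppose there exists m > 0 such that ⟨L ξ, ξ⟩ ≥ m ‖ξ‖² for all ξ ∈ ℝ³. Then the velocity estimate v̂(t) = z(t) + R(t)ᵀ L q(t) converges globally exponentially to v(t): for all t ≥ t₀, ‖v̂(t) − v(t)‖ ≤ e^{−m(t−t₀)} ‖v̂(t₀) − v(t₀)‖. -/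
/-! The estimation error `e = v̂ − v` obeys the autonomous dynamics `ė = e × ω − Rᵀ L R e`:
gravity and the measured acceleration cancel, and so does `⟦ω⟧ Rᵀ L q` against the derivative
of `Rᵀ`, which is `−⟦ω⟧ Rᵀ`. As `e × ω ⊥ e` and `R` is orthogonal,
`d/dt ‖e‖² = −2 ⟨L R e, R e⟩ ≤ −2m ‖e‖²`, and Grönwall's inequality gives
`‖e(t)‖² ≤ e^{−2m(t−t₀)} ‖e(t₀)‖²`. -/

open Matrix

attribute [local instance] Matrix.normedAddCommGroup Matrix.normedSpace

noncomputable def enorm3 (ξ : Fin 3 → ℝ) : ℝ :=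
  Real.sqrt (∑ i, ξ i ^ 2)

section MatrixCalculus

variable {ι κ : Type*} {t : ℝ}

theorem HasDerivAt.mulVec [Fintype κ] {A : ℝ → Matrix ι κ ℝ} {x : ℝ → κ → ℝ}
    {A' : Matrix ι κ ℝ} {x' : κ → ℝ} (hA : HasDerivAt A A' t) (hx : HasDerivAt x x' t) :
    HasDerivAt (fun s => A s *ᵥ x s) (A' *ᵥ x t + A t *ᵥ x') t := by
  refine hasDerivAt_pi.2 fun i => ?_
  simpa only [Matrix.mulVec, _root_.dotProduct, Pi.add_apply, ← Finset.sum_add_distrib] using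
    HasDerivAt.fun_sum (u := Finset.univ) fun j _ =>
      (hasDerivAt_pi.1 (hasDerivAt_pi.1 hA i) j).fun_mul (hasDerivAt_pi.1 hx j)

theorem HasDerivAt.transpose [Fintype ι] [Fintype κ] {A : ℝ → Matrix ι κ ℝ}
    {A' : Matrix ι κ ℝ} (hA : HasDerivAt A A' t) : HasDerivAt (fun s => (A s)ᵀ) A'ᵀ t :=
  hasDerivAt_pi.2 fun j => hasDerivAt_pi.2 fun i => hasDerivAt_pi.1 (hasDerivAt_pi.1 hA i) j

theorem HasDerivAt.dotProduct [Fintype ι] {x y : ℝ → ι → ℝ} {x' y' : ι → ℝ}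
    (hx : HasDerivAt x x' t) (hy : HasDerivAt y y' t) :
    HasDerivAt (fun s => x s ⬝ᵥ y s) (x' ⬝ᵥ y t + x t ⬝ᵥ y') t := by
  simp only [_root_.dotProduct, ← Finset.sum_add_distrib]
  exact HasDerivAt.fun_sum fun i _ => (hasDerivAt_pi.1 hx i).fun_mul (hasDerivAt_pi.1 hy i)

end MatrixCalculus

theorem le_mul_exp_of_hasDerivAt_le {f f' : ℝ → ℝ} {K a b : ℝ}
    (hf : ∀ x, HasDerivAt f (f' x) x) (bound : ∀ x, f' x ≤ K * f x) (hab : a ≤ b) :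
    f b ≤ f a * Real.exp (K * (b - a)) := by
  have hcont : Continuous f := continuous_iff_continuousAt.2 fun x => (hf x).continuousAt
  have := le_gronwallBound_of_liminf_deriv_right_le (ε := 0) hcont.continuousOn
    (fun x _ _ hr => (hf x).hasDerivWithinAt.liminf_right_slope_le hr) le_rfl
    (fun x _ => by simpa using bound x) b ⟨hab, le_rfl⟩
  rwa [gronwallBound_ε0] at this

theorem skew_transpose (ξ : Fin 3 → ℝ) : (skew ξ)ᵀ = -skew ξ := by
  ext i j
  fin_cases i <;> fin_cases j <;> simp [skew]

theorem dotProduct_mulVec_self_of_mul_transpose_eq_one {ι : Type*} [Fintype ι] [DecidableEq ι]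
    {A : Matrix ι ι ℝ} (hA : A * Aᵀ = 1) (x : ι → ℝ) :
    A *ᵥ x ⬝ᵥ A *ᵥ x = x ⬝ᵥ x := by
  rw [dotProduct_mulVec, ← vecMul_transpose, vecMul_vecMul, mul_eq_one_comm.1 hA, vecMul_one]

theorem hasDerivAt_observer_error {g : Fin 3 → ℝ} {L : Matrix (Fin 3) (Fin 3) ℝ}
    {v q z ω a : ℝ → (Fin 3 → ℝ)} {R : ℝ → Matrix (Fin 3) (Fin 3) ℝ} {t : ℝ}
    (hv : HasDerivAt v (v t ⨯₃ ω t + (R t)ᵀ *ᵥ g + a t) t)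
    (hq : HasDerivAt q (R t *ᵥ v t) t)
    (hR : HasDerivAt R (R t * skew (ω t)) t)
    (hz : HasDerivAt z
      ((z t + (R t)ᵀ *ᵥ (L *ᵥ q t)) ⨯₃ ω t + (R t)ᵀ *ᵥ g + a t
        + skew (ω t) *ᵥ ((R t)ᵀ *ᵥ (L *ᵥ q t))
        - (R t)ᵀ *ᵥ (L *ᵥ (R t *ᵥ (z t + (R t)ᵀ *ᵥ (L *ᵥ q t))))) t) :
    HasDerivAt (fun s => z s + (R s)ᵀ *ᵥ (L *ᵥ q s) - v s)
      ((z t + (R t)ᵀ *ᵥ (L *ᵥ q t) - v t) ⨯₃ ω t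
        - (R t)ᵀ *ᵥ (L *ᵥ (R t *ᵥ (z t + (R t)ᵀ *ᵥ (L *ᵥ q t) - v t)))) t := by
  refine ((hz.fun_add (hR.transpose.mulVec ((hasDerivAt_const t L).mulVec hq))).fun_sub
    hv).congr_deriv ?_
  simp only [zero_mulVec, zero_add, transpose_mul, skew_transpose, Matrix.neg_mul, neg_mulVec,
    ← mulVec_mulVec, mulVec_sub, map_sub, LinearMap.sub_apply]
  abel

theorem dotProduct_observer_error_deriv_le {m : ℝ} {L R : Matrix (Fin 3) (Fin 3) ℝ}
    (hR : R * Rᵀ = 1) (hL : ∀ ξ : Fin 3 → ℝ, m * (∑ i, ξ i ^ 2) ≤ ∑ i, (L *ᵥ ξ) i * ξ i)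
    (e ω : Fin 3 → ℝ) :
    e ⬝ᵥ (e ⨯₃ ω - Rᵀ *ᵥ (L *ᵥ (R *ᵥ e))) ≤ -m * (e ⬝ᵥ e) := by
  have hcoercive : m * (R *ᵥ e ⬝ᵥ R *ᵥ e) ≤ L *ᵥ (R *ᵥ e) ⬝ᵥ R *ᵥ e := by
    simpa only [dotProduct, sq] using hL (R *ᵥ e)
  rw [dotProduct_sub, dot_self_cross, dotProduct_mulVec, vecMul_transpose, dotProduct_comm,
    ← dotProduct_mulVec_self_of_mul_transpose_eq_one hR e]
  linarith

theorem enorm3_eq_sqrt_dotProduct (ξ : Fin 3 → ℝ) : enorm3 ξ = √(ξ ⬝ᵥ ξ) := by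
  simp only [enorm3, dotProduct, sq]

theorem rigid_body_velocity_observer_exponential_convergence_general
    (g : Fin 3 → ℝ) (L : Matrix (Fin 3) (Fin 3) ℝ)
    (v q z ω a : ℝ → (Fin 3 → ℝ)) (R : ℝ → Matrix (Fin 3) (Fin 3) ℝ)
    (hR_orth : ∀ t, R t * (R t)ᵀ = 1)
    (hv : ∀ t, HasDerivAt v (v t ⨯₃ ω t + (R t)ᵀ.mulVec g + a t) t)
    (hq : ∀ t, HasDerivAt q ((R t).mulVec (v t)) t)
    (hR : ∀ t, HasDerivAt R (R t * skew (ω t)) t)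
    (hz : ∀ t, HasDerivAt z
      ((z t + (R t)ᵀ.mulVec (L.mulVec (q t))) ⨯₃ ω t + (R t)ᵀ.mulVec g + a t
        + (skew (ω t)).mulVec ((R t)ᵀ.mulVec (L.mulVec (q t)))
        - (R t)ᵀ.mulVec (L.mulVec ((R t).mulVec
            (z t + (R t)ᵀ.mulVec (L.mulVec (q t)))))) t)
    (m : ℝ)
    (hL_coercive : ∀ ξ : Fin 3 → ℝ, m * (∑ i, ξ i ^ 2) ≤ ∑ i, L.mulVec ξ i * ξ i)
    (vhat : ℝ → (Fin 3 → ℝ))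
    (hvhat : ∀ t, vhat t = z t + (R t)ᵀ.mulVec (L.mulVec (q t))) :
    ∀ t₀ t : ℝ, t₀ ≤ t →
      enorm3 (vhat t - v t)
        ≤ Real.exp (-(m * (t - t₀))) * enorm3 (vhat t₀ - v t₀) := by
  intro t₀ t ht
  obtain rfl : vhat = fun s => z s + (R s)ᵀ *ᵥ (L *ᵥ q s) := funext hvhat
  set e := fun s => z s + (R s)ᵀ *ᵥ (L *ᵥ q s) - v s
  have he : ∀ s, HasDerivAt e (e s ⨯₃ ω s - (R s)ᵀ *ᵥ (L *ᵥ (R s *ᵥ e s))) s := fun s =>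
    hasDerivAt_observer_error (hv s) (hq s) (hR s) (hz s)
  have henergy : e t ⬝ᵥ e t ≤ e t₀ ⬝ᵥ e t₀ * Real.exp (-(2 * m) * (t - t₀)) := by
    refine le_mul_exp_of_hasDerivAt_le (fun s => (he s).dotProduct (he s)) (fun s => ?_) ht
    rw [dotProduct_comm _ (e s)]
    linarith [dotProduct_observer_error_deriv_le (hR_orth s) hL_coercive (e s) (ω s)]
  calc enorm3 (e t) ≤ √(e t₀ ⬝ᵥ e t₀ * Real.exp (-(2 * m) * (t - t₀))) := by
        rw [enorm3_eq_sqrt_dotProduct]; exact Real.sqrt_le_sqrt henergy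
    _ = Real.exp (-(m * (t - t₀))) * enorm3 (e t₀) := by
        rw [Real.sqrt_mul' _ (Real.exp_nonneg _), ← Real.exp_half, enorm3_eq_sqrt_dotProduct,
          mul_comm]
        congr 2
        ring

/-- along trajectories of the rigid-body equations
`v̇ = v × ω + Rᵀ g + a`, `q̇ = R v`, `Ṙ = R ⟦ω⟧` (with `R(t) R(t)ᵀ = I`) and of the
observer `ż = (z + Rᵀ L q) × ω + Rᵀ g + a + ⟦ω⟧ Rᵀ L q − Rᵀ L R (z + Rᵀ L q)`,
if `⟨L ξ, ξ⟩ ≥ m ‖ξ‖²` for some `m > 0` (Euclidean inner product and norm), then the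
velocity estimate `v̂ = z + Rᵀ L q` converges globally exponentially to `v`:
`‖v̂(t) − v(t)‖ ≤ e^{−m(t−t₀)} ‖v̂(t₀) − v(t₀)‖` for all `t ≥ t₀`. -/
theorem rigid_body_velocity_observer_exponential_convergence
    (g : Fin 3 → ℝ) (L : Matrix (Fin 3) (Fin 3) ℝ)
    (v q z ω a : ℝ → (Fin 3 → ℝ)) (R : ℝ → Matrix (Fin 3) (Fin 3) ℝ)
    (hR_orth : ∀ t, R t * (R t)ᵀ = 1)
    (hv : ∀ t, HasDerivAt v (v t ⨯₃ ω t + (R t)ᵀ.mulVec g + a t) t)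
    (hq : ∀ t, HasDerivAt q ((R t).mulVec (v t)) t)
    (hR : ∀ t, HasDerivAt R (R t * skew (ω t)) t)
    (hz : ∀ t, HasDerivAt z
      ((z t + (R t)ᵀ.mulVec (L.mulVec (q t))) ⨯₃ ω t + (R t)ᵀ.mulVec g + a t
        + (skew (ω t)).mulVec ((R t)ᵀ.mulVec (L.mulVec (q t)))
        - (R t)ᵀ.mulVec (L.mulVec ((R t).mulVec
            (z t + (R t)ᵀ.mulVec (L.mulVec (q t)))))) t)
    (m : ℝ) (hm : 0 < m)
    (hL_coercive : ∀ ξ : Fin 3 → ℝ, m * (∑ i, ξ i ^ 2) ≤ ∑ i, L.mulVec ξ i * ξ i)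
    (vhat : ℝ → (Fin 3 → ℝ))
    (hvhat : ∀ t, vhat t = z t + (R t)ᵀ.mulVec (L.mulVec (q t))) :
    ∀ t₀ t : ℝ, t₀ ≤ t →
      enorm3 (vhat t - v t)
        ≤ Real.exp (-(m * (t - t₀))) * enorm3 (vhat t₀ - v t₀) :=
  rigid_body_velocity_observer_exponential_convergence_general g L v q z ω a R hR_orth hv hq hR hz m
    hL_coercive vhat hvhat
end
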